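/- arXiv:1706.01653 — 4 statements merged into one kernel-verified Lean document; each statement's English description precedes it below -/
import Mathlib

section
/- Let G be a group, C a finite normal subgroup of G, and φ : G → G/C the canonical surjection. For any g ∈ G, the image φ(C_G(g)) is a subgroup of the centralizer C_{G/C}(gC) of index at most |C|. -/
/-!
Let `H ≤ G` be the preimage of `C_{G/C}(gC)`. Every `x ∈ H` conjugates `g` into the coset `Cg`,
and `x g x⁻¹ = y g y⁻¹` exactly when `x⁻¹ y ∈ C_G(g)`, so the cosets of `C_G(g)` in `H` inject
into `Cg` and `[H : C_G(g)] ≤ |C|`. Pulling back along `G → G/C`, the index of `φ(C_G(g))` in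
`C_{G/C}(gC)` is `[H : C_G(g) C]`, a divisor of `[H : C_G(g)]`.
-/

section

variable {G : Type*} [Group G]

theorem conj_eq_conj_iff_commute_inv_mul {g x y : G} :
    x * g * x⁻¹ = y * g * y⁻¹ ↔ Commute (x⁻¹ * y) g := by
  rw [Commute, SemiconjBy]
  constructor <;> intro h
  · calc x⁻¹ * y * g = x⁻¹ * (y * g * y⁻¹) * y := by group
      _ = x⁻¹ * (x * g * x⁻¹) * y := by rw [h]
      _ = g * (x⁻¹ * y) := by group
  · calc x * g * x⁻¹ = x * (g * (x⁻¹ * y)) * y⁻¹ := by group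
      _ = x * (x⁻¹ * y * g) * y⁻¹ := by rw [h]
      _ = y * g * y⁻¹ := by group

namespace Subgroup

noncomputable def quotientCentralizerEmbeddingOfConjMem {H : Subgroup G} {g : G} {S : Set G}
    (hS : ∀ x ∈ H, x * g * x⁻¹ ∈ S) : H ⧸ (centralizer {g}).subgroupOf H ↪ S where
  toFun := Quotient.lift (fun x : H => (⟨x * g * (x : G)⁻¹, hS x x.2⟩ : S)) fun x y hxy => by
    rw [← Quotient.eq_iff_equiv, QuotientGroup.eq, mem_subgroupOf,
      mem_centralizer_singleton_iff] at hxy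
    exact Subtype.ext (conj_eq_conj_iff_commute_inv_mul.mpr hxy)
  inj' := by
    rintro ⟨x⟩ ⟨y⟩ hxy
    refine Quotient.sound (QuotientGroup.leftRel_apply.mpr ?_)
    rw [mem_subgroupOf, mem_centralizer_singleton_iff]
    exact conj_eq_conj_iff_commute_inv_mul.mp (congrArg Subtype.val hxy)

theorem relIndex_le_card_of_centralizer_le {H K : Subgroup G} {g : G} {S : Set G} [Finite S]
    (hK : centralizer {g} ≤ K) (hS : ∀ x ∈ H, x * g * x⁻¹ ∈ S) :
    K.relIndex H ≤ Nat.card S := by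
  have e := quotientCentralizerEmbeddingOfConjMem hS
  have : Finite (H ⧸ (centralizer {g}).subgroupOf H) := Finite.of_injective e e.injective
  calc K.relIndex H ≤ (centralizer {g}).relIndex H :=
        relIndex_le_of_le_left hK index_ne_zero_of_finite
    _ ≤ Nat.card S := Nat.card_le_card_of_injective e e.injective

end Subgroup

end

theorem stmt_2 (G : Type*) [Group G] (C : Subgroup G) [C.Normal] [Finite C] (g : G) :
    (Subgroup.centralizer {g}).map (QuotientGroup.mk' C) ≤
        Subgroup.centralizer {((g : G ⧸ C))} ∧
      ((Subgroup.centralizer {g}).map (QuotientGroup.mk' C)).relIndex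
          (Subgroup.centralizer {((g : G ⧸ C))}) ≤ Nat.card C := by
  refine ⟨by simpa using Subgroup.map_centralizer_le_centralizer_image {g} (QuotientGroup.mk' C),
    ?_⟩
  set H := (Subgroup.centralizer {(g : G ⧸ C)}).comap (QuotientGroup.mk' C)
  have hconj : ∀ x ∈ H, x * g * x⁻¹ ∈ (· * g) '' (C : Set G) := by
    intro x hx
    rw [Subgroup.mem_comap, QuotientGroup.mk'_apply, Subgroup.mem_centralizer_singleton_iff] at hx
    refine ⟨x * g * x⁻¹ * g⁻¹, ?_, by group⟩
    rw [SetLike.mem_coe, ← QuotientGroup.eq_one_iff]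
    simp only [QuotientGroup.mk_mul, QuotientGroup.mk_inv, hx]
    group
  rw [← Subgroup.map_comap_eq_self_of_surjective (QuotientGroup.mk'_surjective C)
    (Subgroup.centralizer {(g : G ⧸ C)}), ← Subgroup.relIndex_comap, Subgroup.comap_map_eq,
    QuotientGroup.ker_mk']
  calc _ ≤ Nat.card ((· * g) '' (C : Set G)) :=
        Subgroup.relIndex_le_card_of_centralizer_le le_sup_left hconj
    _ = Nat.card C := Nat.card_image_of_injective (mul_left_injective g) _
end

section
/- Fix a natural number h. For a positive integer u, let z = ⌊h/u⌋ and e = h mod u, and define f(u) = z²·u + e·(2z + 1) (equivalently f(u) = z·h + e·(z+1)). Then f is nonincreasing: for all positive integers u, f(u) ≥ f(u+1). -/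
lemma sum_form (u : ℕ) (hu : 0 < u) : ∀ h : ℕ,
    ∑ k ∈ Finset.range h, (2 * (k / u) + 1) =
      (h / u) ^ 2 * u + (h % u) * (2 * (h / u) + 1) := by
  intro h
  induction h with
  | zero => simp
  | succ n ih =>
      rw [Finset.sum_range_succ, ih]
      have h1 : n = u * (n / u) + n % u := (Nat.div_add_mod n u).symm
      have h2 : n % u < u := Nat.mod_lt _ hu
      rcases Nat.lt_or_ge (n % u + 1) u with hc | hc
      · have hd : (n + 1) / u = n / u := by
          conv_lhs => rw [show n + 1 = u * (n / u) + (n % u + 1) by omega]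
          rw [Nat.mul_add_div hu, Nat.div_eq_of_lt hc]; omega
        have hm : (n + 1) % u = n % u + 1 := by
          conv_lhs => rw [show n + 1 = u * (n / u) + (n % u + 1) by omega]
          rw [Nat.mul_add_mod, Nat.mod_eq_of_lt hc]
        rw [hd, hm]; ring
      · have he : n % u + 1 = u := by omega
        have hd : (n + 1) / u = n / u + 1 := by
          conv_lhs => rw [show n + 1 = u * (n / u) + u by omega]
          rw [Nat.mul_add_div hu, Nat.div_self hu]
        have hm : (n + 1) % u = 0 := by
          conv_lhs => rw [show n + 1 = u * (n / u) + u by omega]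
          simp [Nat.mul_add_mod]
        set z := n / u with hz
        set r := n % u with hr
        rw [hd, hm, ← he]; ring

theorem stmt_9 (h : ℕ) (u : ℕ) (hu : 0 < u) :
    (h / (u + 1)) ^ 2 * (u + 1) + (h % (u + 1)) * (2 * (h / (u + 1)) + 1) ≤
      (h / u) ^ 2 * u + (h % u) * (2 * (h / u) + 1) := by
  rw [← sum_form u hu h, ← sum_form (u + 1) (by omega) h]
  exact Finset.sum_le_sum fun k _ => by
    have : k / (u + 1) ≤ k / u := Nat.div_le_div_left (Nat.le_succ u) hu
    omega
end

section
/- Let h, u, z, e, z', e', j be natural numbers with u ≥ 2, z ≥ 1, z' ≥ 1, h = z·u + e, 0 ≤ e < u, h = z'·(u+1) + e', 0 ≤ e' ≤ u, and j = z − z' (so z' ≤ z). Then either j ≤ 1 or z ≥ 2j. -/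
theorem stmt_17 (h u z e z' e' j : ℕ)
    (hu : 2 ≤ u) (hz : 1 ≤ z) (hz' : 1 ≤ z')
    (hdiv : h = z * u + e) (he : e < u)
    (hdiv' : h = z' * (u + 1) + e') (he' : e' ≤ u)
    (hzz : z' ≤ z) (hj : j = z - z') :
    j ≤ 1 ∨ 2 * j ≤ z := by
  rcases le_or_gt j 1 with h1 | h1
  · exact Or.inl h1
  · right
    have hzj : z = z' + j := by omega
    have key : j * u + e = z' + e' := by
      have h2 : z * u = z' * u + j * u := by rw [hzj]; ring
      have h2' : z' * (u + 1) = z' * u + z' := by ring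
      omega
    have h3 : (j - 1) * u ≤ z' := by
      have hj1 : j - 1 + 1 = j := by omega
      have : (j - 1) * u + u = j * u := by
        calc (j - 1) * u + u = (j - 1 + 1) * u := by ring
          _ = j * u := by rw [hj1]
      omega
    have h4 : 2 * (j - 1) ≤ (j - 1) * u := by
      calc 2 * (j - 1) = (j - 1) * 2 := by ring
        _ ≤ (j - 1) * u := Nat.mul_le_mul_left _ hu
    omega
end

section
/- Fix natural numbers h and q with q ≥ 1. For positive integers u, let z(u) = ⌊h/u⌋ and e(u) = h mod u. Then for all positive integers u, the difference (z(u)·h + e(u)·(z(u)+1)) − (z(u+1)·h + e(u+1)·(z(u+1)+1)) is a nonnegative even number. -/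
lemma aux_par (h u : ℕ) (hu : 1 ≤ u) :
    Even ((h / u) * h + (h % u) * ((h / u) + 1) + h) := by
  obtain ⟨z, hz⟩ : ∃ z, h / u = z := ⟨_, rfl⟩
  obtain ⟨e, he⟩ : ∃ e, h % u = e := ⟨_, rfl⟩
  have hmod : z * u + e = h := by
    rw [← hz, ← he, mul_comm]; exact Nat.div_add_mod h u
  rw [hz, he]
  have key : z * h + e * (z + 1) + h = z * (z + 1) * u + 2 * (e * (z + 1)) := by
    nlinarith [hmod]
  rw [key]
  exact (Nat.even_mul_succ_self z).mul_right u |>.add (even_two_mul _)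

lemma aux_le (h u : ℕ) (hu : 1 ≤ u) :
    (h / (u + 1)) * h + (h % (u + 1)) * ((h / (u + 1)) + 1) ≤
        (h / u) * h + (h % u) * ((h / u) + 1) := by
  obtain ⟨z, hz⟩ : ∃ z, h / u = z := ⟨_, rfl⟩
  obtain ⟨e, he⟩ : ∃ e, h % u = e := ⟨_, rfl⟩
  obtain ⟨z', hz'⟩ : ∃ z, h / (u + 1) = z := ⟨_, rfl⟩
  obtain ⟨e', he'⟩ : ∃ e, h % (u + 1) = e := ⟨_, rfl⟩
  have h1 : z * u + e = h := by
    rw [← hz, ← he, mul_comm]; exact Nat.div_add_mod h u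
  have h2 : z' * (u + 1) + e' = h := by
    rw [← hz', ← he', mul_comm]; exact Nat.div_add_mod h (u + 1)
  have he1 : e < u := by rw [← he]; exact Nat.mod_lt _ (by omega)
  have he2 : e' < u + 1 := by rw [← he']; exact Nat.mod_lt _ (by omega)
  have hzz : z' ≤ z := by
    rw [← hz, ← hz']; exact Nat.div_le_div_left (by omega) (by omega)
  rw [hz, he, hz', he']
  rcases eq_or_lt_of_le hzz with heq | hlt
  · subst heq
    have hx : z' * (u + 1) = z' * u + z' := by ring
    have : e' ≤ e := by omega
    nlinarith
  · nlinarith [Nat.mul_le_mul_left u hlt, h1, h2]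

theorem stmt_19 (h q : ℕ) (hq : 1 ≤ q) (u : ℕ) (hu : 1 ≤ u) :
    (h / (u + 1)) * h + (h % (u + 1)) * ((h / (u + 1)) + 1) ≤
        (h / u) * h + (h % u) * ((h / u) + 1) ∧
      Even (((h / u) * h + (h % u) * ((h / u) + 1)) -
        ((h / (u + 1)) * h + (h % (u + 1)) * ((h / (u + 1)) + 1))) := by
  have hle := aux_le h u hu
  refine ⟨hle, ?_⟩
  rw [Nat.even_sub hle]
  have p1 := aux_par h u hu
  have p2 := aux_par h (u + 1) (by omega)
  rw [Nat.even_add] at p1 p2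
  tauto
end
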